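/- arXiv:math/0206209 — 7 statements merged into one kernel-verified Lean document; each statement's English description precedes it below -/
import Mathlib

section
/- Let L be an additive subgroup of ℂ with i·L ⊆ L, and let α ∈ L be a nonzero element of minimal absolute value, i.e., α ≠ 0 and |α| ≤ |β| for every nonzero β ∈ L. Then L = { (a + b·i)·α : a, b ∈ ℤ }, that is, L is exactly the set of Gaussian-integer multiples of α. -/
/-- An additive subgroup of ℂ stable under multiplication by `i` equals the set of
    Gaussian-integer multiples of any of its nonzero elements of minimal absolute value. -/
theorem subgroup_stable_under_I_eq_gaussian_multiples
    (L : AddSubgroup ℂ) (hL : ∀ z ∈ L, Complex.I * z ∈ L)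
    (α : ℂ) (hα : α ∈ L) (hα0 : α ≠ 0)
    (hmin : ∀ β ∈ L, β ≠ 0 → ‖α‖ ≤ ‖β‖) :
    (L : Set ℂ) = {z : ℂ | ∃ a b : ℤ, z = ((a : ℂ) + (b : ℂ) * Complex.I) * α} := by
  have hmem : ∀ a b : ℤ, ((a : ℂ) + (b : ℂ) * Complex.I) * α ∈ L := by
    intro a b
    have : ((a : ℂ) + (b : ℂ) * Complex.I) * α = a • α + b • (Complex.I * α) := by
      push_cast [zsmul_eq_mul]; ring
    rw [this]
    exact L.add_mem (L.zsmul_mem hα a) (L.zsmul_mem (hL α hα) b)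
  ext z
  simp only [SetLike.mem_coe, Set.mem_setOf_eq]
  constructor
  · intro hz
    set c : ℂ := z / α with hc
    have hzc : z = c * α := by rw [hc, div_mul_cancel₀ z hα0]
    set a : ℤ := round c.re
    set b : ℤ := round c.im
    refine ⟨a, b, ?_⟩
    set w : ℂ := z - ((a : ℂ) + (b : ℂ) * Complex.I) * α with hw
    have hwL : w ∈ L := L.sub_mem hz (hmem a b)
    have hwabs : ‖w‖ < ‖α‖ := by
      have hw' : w = (c - ((a : ℂ) + (b : ℂ) * Complex.I)) * α := by
        rw [hw, hzc]; ring
      rw [hw', norm_mul]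
      have h1 : ‖c - ((a : ℂ) + (b : ℂ) * Complex.I)‖ < 1 := by
        have hre : |c.re - (a : ℝ)| ≤ 1 / 2 := abs_sub_round c.re
        have him : |c.im - (b : ℝ)| ≤ 1 / 2 := abs_sub_round c.im
        have hsq : ‖c - ((a : ℂ) + (b : ℂ) * Complex.I)‖ ^ 2 < 1 := by
          rw [Complex.sq_norm, Complex.normSq_apply]
          have hre' : (c - ((a : ℂ) + (b : ℂ) * Complex.I)).re = c.re - a := by simp
          have him' : (c - ((a : ℂ) + (b : ℂ) * Complex.I)).im = c.im - b := by simp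
          rw [hre', him']
          nlinarith [abs_nonneg (c.re - (a : ℝ)), abs_nonneg (c.im - (b : ℝ)),
            sq_abs (c.re - (a : ℝ)), sq_abs (c.im - (b : ℝ))]
        nlinarith [norm_nonneg (c - ((a : ℂ) + (b : ℂ) * Complex.I))]
      calc ‖c - ((a : ℂ) + (b : ℂ) * Complex.I)‖ * ‖α‖
          < 1 * ‖α‖ := by
            exact mul_lt_mul_of_pos_right h1 (norm_pos_iff.mpr hα0)
        _ = ‖α‖ := one_mul _
    have hw0 : w = 0 := by
      by_contra h0
      exact absurd (hmin w hwL h0) (not_le.mpr hwabs)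
    exact sub_eq_zero.mp hw0
  · rintro ⟨a, b, rfl⟩
    exact hmem a b
end

section
/- Let ω = (−1 + i·√3)/2 ∈ ℂ (a primitive cube root of unity). Let L be an additive subgroup of ℂ with ω·L ⊆ L, and let α ∈ L be a nonzero element of minimal absolute value, i.e., α ≠ 0 and |α| ≤ |β| for every nonzero β ∈ L. Then L = { (a + b·ω)·α : a, b ∈ ℤ }, that is, L is exactly the set of Eisenstein-integer multiples of α. -/
private lemma eis_mem (L : AddSubgroup ℂ)
    (hL : ∀ z ∈ L, ((-1 + Complex.I * (Real.sqrt 3 : ℂ)) / 2) * z ∈ L)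
    (α : ℂ) (hα : α ∈ L) (a b : ℤ) :
    ((a : ℂ) + (b : ℂ) * ((-1 + Complex.I * (Real.sqrt 3 : ℂ)) / 2)) * α ∈ L := by
  have h1 : (a : ℂ) * α + (b : ℂ) * (((-1 + Complex.I * (Real.sqrt 3 : ℂ)) / 2) * α) ∈ L := by
    refine AddSubgroup.add_mem L ?_ ?_
    · simpa [zsmul_eq_mul] using AddSubgroup.zsmul_mem L hα a
    · simpa [zsmul_eq_mul] using AddSubgroup.zsmul_mem L (hL α hα) b
  convert h1 using 1; ring

/-- An additive subgroup of ℂ stable under multiplication by the primitive cube root of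
    unity `ω = (−1 + i√3)/2` equals the set of Eisenstein-integer multiples of any of its
    nonzero elements of minimal absolute value. -/
theorem subgroup_stable_under_omega_eq_eisenstein_multiples
    (L : AddSubgroup ℂ)
    (hL : ∀ z ∈ L, ((-1 + Complex.I * (Real.sqrt 3 : ℂ)) / 2) * z ∈ L)
    (α : ℂ) (hα : α ∈ L) (hα0 : α ≠ 0)
    (hmin : ∀ β ∈ L, β ≠ 0 → ‖α‖ ≤ ‖β‖) :
    (L : Set ℂ) = {z : ℂ | ∃ a b : ℤ,
      z = ((a : ℂ) + (b : ℂ) * ((-1 + Complex.I * (Real.sqrt 3 : ℂ)) / 2)) * α} := by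
  set ω : ℂ := (-1 + Complex.I * (Real.sqrt 3 : ℂ)) / 2 with hωdef
  have hs3 : (0:ℝ) < Real.sqrt 3 := Real.sqrt_pos.mpr (by norm_num)
  have hs3sq : Real.sqrt 3 * Real.sqrt 3 = 3 := Real.mul_self_sqrt (by norm_num)
  have hωre : ω.re = -1/2 := by
    simp [hωdef, Complex.div_re, Complex.add_re, Complex.mul_re, Complex.normSq]
  have hωim : ω.im = Real.sqrt 3 / 2 := by
    simp [hωdef, Complex.div_im, Complex.add_im, Complex.mul_im, Complex.normSq]
  ext z
  simp only [SetLike.mem_coe, Set.mem_setOf_eq]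
  constructor
  · intro hz
    set w : ℂ := z / α with hwdef
    have hwα : z = w * α := by rw [hwdef, div_mul_cancel₀ z hα0]
    set y : ℝ := w.im * 2 / Real.sqrt 3 with hydef
    set x : ℝ := w.re + w.im / Real.sqrt 3 with hxdef
    have hxy : w = (x : ℂ) + (y : ℂ) * ω := by
      apply Complex.ext
      · simp [Complex.add_re, Complex.mul_re, hωre, hωim, hxdef, hydef]
        field_simp
        ring
      · simp [Complex.add_im, Complex.mul_im, hωre, hωim, hxdef, hydef]
        field_simp
    set a : ℤ := round x with hadef
    set b : ℤ := round y with hbdef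
    refine ⟨a, b, ?_⟩
    have hmem : ((a : ℂ) + (b : ℂ) * ω) * α ∈ L := eis_mem L hL α hα a b
    set r : ℂ := z - ((a : ℂ) + (b : ℂ) * ω) * α with hrdef
    have hrL : r ∈ L := AddSubgroup.sub_mem L hz hmem
    -- r = ((x-a) + (y-b) ω) α
    have hrval : r = (((x - a : ℝ) : ℂ) + ((y - b : ℝ) : ℂ) * ω) * α := by
      rw [hrdef, hwα, hxy]; push_cast; ring
    set x' : ℝ := x - a with hx'def
    set y' : ℝ := y - b with hy'def
    have hx'b : |x'| ≤ 1/2 := abs_sub_round x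
    have hy'b : |y'| ≤ 1/2 := abs_sub_round y
    have hnsq : Complex.normSq ((x' : ℂ) + (y' : ℂ) * ω) = x'^2 - x'*y' + y'^2 := by
      simp only [Complex.normSq_apply, Complex.add_re, Complex.add_im, Complex.mul_re,
        Complex.mul_im, Complex.ofReal_re, Complex.ofReal_im, hωre, hωim]
      linear_combination (y' ^ 2 / 4) * hs3sq
    have hnsq_le : Complex.normSq ((x' : ℂ) + (y' : ℂ) * ω) ≤ 3/4 := by
      rw [hnsq]
      have h1 : x'^2 ≤ (1/2)^2 := sq_le_sq' (by linarith [abs_le.mp hx'b]) (abs_le.mp hx'b).2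
      have h2 : y'^2 ≤ (1/2)^2 := sq_le_sq' (by linarith [abs_le.mp hy'b]) (abs_le.mp hy'b).2
      nlinarith [abs_le.mp hx'b, abs_le.mp hy'b, abs_mul x' y',
        abs_le.mp (abs_abs x' ▸ le_refl |x'|)]
    have hrabs : ‖r‖ < ‖α‖ := by
      have h1 : ‖r‖ ^ 2 = Complex.normSq ((x' : ℂ) + (y' : ℂ) * ω) * ‖α‖ ^ 2 := by
        rw [hrval, norm_mul, mul_pow, Complex.sq_norm]
      have hαpos : 0 < ‖α‖ := norm_pos_iff.mpr hα0
      have h2 : ‖r‖ ^ 2 < ‖α‖ ^ 2 := by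
        rw [h1]
        calc Complex.normSq ((x' : ℂ) + (y' : ℂ) * ω) * ‖α‖ ^ 2
            ≤ 3/4 * ‖α‖ ^ 2 := by nlinarith [sq_nonneg (‖α‖)]
          _ < ‖α‖ ^ 2 := by nlinarith
      exact lt_of_pow_lt_pow_left₀ 2 (norm_nonneg α) h2
    have hr0 : r = 0 := by
      by_contra h0
      exact absurd hrabs (not_lt.mpr (hmin r hrL h0))
    exact sub_eq_zero.mp hr0
  · rintro ⟨a, b, rfl⟩
    exact eis_mem L hL α hα a b
end

section
/- Let Γ be a lattice in ℂ², i.e., an additive subgroup of ℂ² that is discrete (it has no accumulation point in ℂ²) and spans ℂ² as a real vector space, and suppose i·Γ = Γ (Γ is stable under scalar multiplication by i). Then Γ, regarded as a module over the ring ℤ[i] of Gaussian integers acting by complex scalar multiplication, is a free ℤ[i]-module of rank 2. -/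
/-!
`Γ` is stable under `ℤ[i]` acting through `ℤ[i] ⊆ ℂ`, and is torsion-free for this action since
it sits in a complex vector space. As a lattice in `ℂ² ≅ ℝ⁴` it is a free `ℤ`-module of rank 4.
Over the principal ideal domain `ℤ[i]` a finitely generated torsion-free module is free, and as
`ℤ[i]` itself has `ℤ`-rank 2, the `ℤ[i]`-rank of `Γ` is `4 / 2 = 2`.
-/

open Module Pointwise

local notation "ℤ[i]" => GaussianInt

namespace GaussianInt

def linearEquivProd : ℤ[i] ≃ₗ[ℤ] ℤ × ℤ where
  toFun q := (q.re, q.im)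
  invFun p := ⟨p.1, p.2⟩
  map_add' _ _ := rfl
  map_smul' _ _ := by ext <;> simp
  left_inv _ := rfl
  right_inv _ := rfl

instance : Module.Free ℤ ℤ[i] := .of_equiv linearEquivProd.symm

theorem finrank_int : finrank ℤ ℤ[i] = 2 := by
  simp [linearEquivProd.finrank_eq]

theorem finrank_int_eq_two_mul (M : Type*) [AddCommGroup M] [Module ℤ[i] M] [Module.Finite ℤ M]
    [IsTorsionFree ℤ[i] M] : finrank ℤ M = 2 * finrank ℤ[i] M := by
  have : Module.Finite ℤ[i] M := .of_restrictScalars_finite ℤ ℤ[i] M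
  rw [← Module.finrank_mul_finrank ℤ ℤ[i] M, finrank_int]

end GaussianInt

theorem Module.Basis.bijective_smul_add_smul {R M : Type*} [Semiring R] [AddCommMonoid M]
    [Module R M] (b : Basis (Fin 2) R M) :
    Function.Bijective fun p : R × R => p.1 • b 0 + p.2 • b 1 := by
  simpa [Fin.sum_univ_two, Function.comp_def] using
    ((finTwoArrowEquiv R).symm.trans b.equivFun.symm.toEquiv).bijective

noncomputable local instance (V : Type*) [AddCommGroup V] [Module ℂ V] : Module ℤ[i] V :=
  .compHom V GaussianInt.toComplex

section ComplexModule

variable {V : Type*} [AddCommGroup V] [Module ℂ V]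

theorem GaussianInt.smul_def (q : ℤ[i]) (v : V) : q • v = (q : ℂ) • v := rfl

instance : IsTorsionFree ℤ[i] V :=
  .comap GaussianInt.toComplex
    (fun _ hq => .of_ne_zero (GaussianInt.toComplex_eq_zero.not.mpr hq.ne_zero)) fun _ _ => rfl

def AddSubgroup.toGaussianIntSubmodule (Γ : AddSubgroup V)
    (hΓ : ∀ v ∈ Γ, Complex.I • v ∈ Γ) : Submodule ℤ[i] V where
  toAddSubmonoid := Γ.toAddSubmonoid
  smul_mem' q v hv := by
    rw [GaussianInt.smul_def, GaussianInt.toComplex_def, add_smul, mul_smul,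
      Int.cast_smul_eq_zsmul, Int.cast_smul_eq_zsmul]
    exact Γ.add_mem (Γ.zsmul_mem hv _) (Γ.zsmul_mem (hΓ v hv) _)

def gaussianIntComb (x y : V) (p : (ℤ × ℤ) × ℤ × ℤ) : V :=
  ((p.1.1 : ℂ) + p.1.2 * Complex.I) • x + ((p.2.1 : ℂ) + p.2.2 * Complex.I) • y

theorem gaussianIntComb_eq_smul_add_smul (x y : V) (p : (ℤ × ℤ) × ℤ × ℤ) :
    gaussianIntComb x y p =
      GaussianInt.linearEquivProd.symm p.1 • x + GaussianInt.linearEquivProd.symm p.2 • y := by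
  simp [gaussianIntComb, GaussianInt.smul_def, GaussianInt.linearEquivProd,
    GaussianInt.toComplex_def']

theorem Submodule.gaussianIntComb_mem (L : Submodule ℤ[i] V) {x y : V} (hx : x ∈ L) (hy : y ∈ L)
    (p : (ℤ × ℤ) × ℤ × ℤ) : gaussianIntComb x y p ∈ L :=
  gaussianIntComb_eq_smul_add_smul x y p ▸ L.add_mem (L.smul_mem _ hx) (L.smul_mem _ hy)

theorem Module.Basis.existsUnique_gaussianIntComb {L : Submodule ℤ[i] V}
    (b : Basis (Fin 2) ℤ[i] L) {v : V} (hv : v ∈ L) :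
    ∃! p, v = gaussianIntComb (b 0 : V) (b 1 : V) p := by
  let e := GaussianInt.linearEquivProd.toEquiv.prodCongr GaussianInt.linearEquivProd.toEquiv
  refine (existsUnique_congr fun p => ?_).mp
    ((b.bijective_smul_add_smul.comp e.symm.bijective).existsUnique ⟨v, hv⟩)
  rw [eq_comm, Subtype.ext_iff, gaussianIntComb_eq_smul_add_smul]
  rfl

end ComplexModule

section Lattice

variable {V : Type*} [NormedAddCommGroup V] [NormedSpace ℂ V] [FiniteDimensional ℂ V]
  (L : Submodule ℤ[i] V) [DiscreteTopology (L.restrictScalars ℤ)]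
  [IsZLattice ℝ (L.restrictScalars ℤ)]

theorem Submodule.finrank_gaussianInt_eq_finrank_complex : finrank ℤ[i] L = finrank ℂ V := by
  have : Module.Finite ℤ L := ZLattice.module_finite ℝ (L.restrictScalars ℤ)
  have hrank : finrank ℤ L = finrank ℝ V := ZLattice.rank ℝ (L.restrictScalars ℤ)
  rw [GaussianInt.finrank_int_eq_two_mul, finrank_real_of_complex] at hrank
  omega

theorem Submodule.nonempty_basis_gaussianInt_of_isZLattice :
    Nonempty (Basis (Fin (finrank ℂ V)) ℤ[i] L) := by
  have : Module.Finite ℤ L := ZLattice.module_finite ℝ (L.restrictScalars ℤ)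
  have : Module.Finite ℤ[i] L := .of_restrictScalars_finite ℤ ℤ[i] L
  exact ⟨finBasisOfFinrankEq ℤ[i] L L.finrank_gaussianInt_eq_finrank_complex⟩

end Lattice

/-- A lattice `Γ` in ℂ² stable under scalar multiplication by `i` is a free module of
    rank 2 over the Gaussian integers ℤ[i] = {a + b·i : a, b ∈ ℤ}: there are `e₁, e₂ ∈ Γ`
    such that `Γ` consists exactly of the ℤ[i]-combinations of `e₁, e₂`, each element of
    `Γ` being such a combination in a unique way. -/
theorem lattice_stable_under_I_free_rank_two
    (Γ : AddSubgroup (EuclideanSpace ℂ (Fin 2)))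
    (hdisc : ∀ z : EuclideanSpace ℂ (Fin 2),
      ¬ AccPt z (Filter.principal (Γ : Set (EuclideanSpace ℂ (Fin 2)))))
    (hspan : Submodule.span ℝ (Γ : Set (EuclideanSpace ℂ (Fin 2))) = ⊤)
    (hI : Complex.I • (Γ : Set (EuclideanSpace ℂ (Fin 2)))
      = (Γ : Set (EuclideanSpace ℂ (Fin 2)))) :
    ∃ e₁ e₂ : EuclideanSpace ℂ (Fin 2), e₁ ∈ Γ ∧ e₂ ∈ Γ ∧
      (∀ a b c d : ℤ,
        ((a : ℂ) + (b : ℂ) * Complex.I) • e₁ + ((c : ℂ) + (d : ℂ) * Complex.I) • e₂ ∈ Γ) ∧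
      ∀ v ∈ Γ, ∃! p : (ℤ × ℤ) × ℤ × ℤ,
        v = ((p.1.1 : ℂ) + (p.1.2 : ℂ) * Complex.I) • e₁ +
            ((p.2.1 : ℂ) + (p.2.2 : ℂ) * Complex.I) • e₂ := by
  let L := Γ.toGaussianIntSubmodule fun _ hv => hI.subset (Set.smul_mem_smul_set hv)
  have : DiscreteTopology (L.restrictScalars ℤ) := discreteTopology_of_noAccPts fun z _ => hdisc z
  have : IsZLattice ℝ (L.restrictScalars ℤ) := ⟨hspan⟩
  obtain ⟨b⟩ := L.nonempty_basis_gaussianInt_of_isZLattice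
  rw [finrank_euclideanSpace_fin] at b
  exact ⟨b 0, b 1, (b 0).2, (b 1).2,
    fun a b' c d => L.gaussianIntComb_mem (b 0).2 (b 1).2 ((a, b'), c, d),
    fun _ hv => b.existsUnique_gaussianIntComb hv⟩
end

section
/- Let ω = (−1 + i·√3)/2 ∈ ℂ (a primitive cube root of unity). Let Γ be a lattice in ℂ², i.e., an additive subgroup of ℂ² that is discrete (it has no accumulation point in ℂ²) and spans ℂ² as a real vector space, and suppose ω·Γ = Γ (Γ is stable under scalar multiplication by ω). Then Γ, regarded as a module over the ring ℤ[ω] of Eisenstein integers acting by complex scalar multiplication, is a free ℤ[ω]-module of rank 2. -/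
/-!
The Eisenstein integers are norm-Euclidean: every complex number lies at distance less than 1
from some `a + b ω`, so `ℤ[ω]` is a principal ideal domain. Stability under `ω` makes `Γ` a
`ℤ[ω]`-module. As a discrete subgroup spanning `ℂ² ≅ ℝ⁴`, `Γ` is a free `ℤ`-module of rank 4,
so it is a finitely generated torsion-free module over the PID `ℤ[ω]`, hence free, and its rank
is `4 / rank_ℤ ℤ[ω] = 2`.
-/

open Module Pointwise

theorem IsPrincipalIdealRing.of_exists_sub_mul_lt {R : Type*} [CommRing R] (N : R → ℕ)
    (hN : ∀ a b : R, b ≠ 0 → ∃ q, N (a - q * b) < N b) : IsPrincipalIdealRing R := by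
  refine ⟨fun I => ?_⟩
  by_cases hI : I = ⊥
  · exact hI ▸ bot_isPrincipal
  set s : Set R := {x | x ∈ I ∧ x ≠ 0}
  have hne : s.Nonempty := Submodule.exists_mem_ne_zero_of_ne_bot hI
  set g := Function.argminOn N s hne
  obtain ⟨hgI, hg0⟩ : g ∈ I ∧ g ≠ 0 := Function.argminOn_mem N s hne
  refine ⟨⟨g, le_antisymm (fun a ha => ?_) ((Submodule.span_singleton_le_iff_mem _ _).mpr hgI)⟩⟩
  obtain ⟨q, hq⟩ := hN a g hg0
  have hrem : a - q * g = 0 := by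
    by_contra hr
    exact Function.not_lt_argminOn N s ⟨I.sub_mem ha (I.mul_mem_left q hgI), hr⟩ hq
  exact Submodule.mem_span_singleton.mpr ⟨q, (sub_eq_zero.mp hrem).symm⟩

namespace EisensteinInt

open Complex

noncomputable def ω : ℂ := (-1 + I * (Real.sqrt 3 : ℂ)) / 2

@[simp] lemma ω_re : ω.re = -1 / 2 := by simp [ω]

@[simp] lemma ω_im : ω.im = Real.sqrt 3 / 2 := by simp [ω]

lemma ω_mul_ω : ω * ω = -1 - ω := by
  have h3 : Real.sqrt 3 * Real.sqrt 3 = 3 := Real.mul_self_sqrt (by norm_num)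
  apply Complex.ext <;> simp [mul_re, mul_im] <;> nlinarith

def subring : Subring ℂ where
  carrier := {z | ∃ a b : ℤ, z = a + b * ω}
  zero_mem' := ⟨0, 0, by simp⟩
  one_mem' := ⟨1, 0, by simp⟩
  add_mem' := by
    rintro _ _ ⟨a, b, rfl⟩ ⟨c, d, rfl⟩
    exact ⟨a + c, b + d, by push_cast; ring⟩
  neg_mem' := by
    rintro _ ⟨a, b, rfl⟩
    exact ⟨-a, -b, by push_cast; ring⟩
  mul_mem' := by
    rintro _ _ ⟨a, b, rfl⟩ ⟨c, d, rfl⟩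
    refine ⟨a * c - b * d, a * d + b * c - b * d, ?_⟩
    push_cast
    linear_combination (b * d : ℂ) * ω_mul_ω

notation "ℤ[ω]" => EisensteinInt.subring

lemma normSq_intCast_add_intCast_mul_ω (a b : ℤ) :
    normSq (a + b * ω) = ((a ^ 2 - a * b + b ^ 2 : ℤ) : ℝ) := by
  have h3 : Real.sqrt 3 * Real.sqrt 3 = 3 := Real.mul_self_sqrt (by norm_num)
  simp only [normSq_apply, add_re, add_im, mul_re, mul_im, intCast_re, intCast_im, ω_re, ω_im]
  push_cast
  linear_combination (b ^ 2 / 4 : ℝ) * h3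

lemma exists_normSq_eq_natCast {z : ℂ} (hz : z ∈ ℤ[ω]) : ∃ n : ℕ, normSq z = n := by
  obtain ⟨a, b, rfl⟩ := hz
  have h : 0 ≤ a ^ 2 - a * b + b ^ 2 := by nlinarith [sq_nonneg (2 * a - b), sq_nonneg b]
  exact ⟨(a ^ 2 - a * b + b ^ 2).toNat, by
    rw [normSq_intCast_add_intCast_mul_ω, ← Int.toNat_of_nonneg h]; rfl⟩

noncomputable def natNorm (x : ℤ[ω]) : ℕ := ⌊normSq (x : ℂ)⌋₊

lemma natCast_natNorm (x : ℤ[ω]) : (natNorm x : ℝ) = normSq (x : ℂ) := by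
  obtain ⟨n, hn⟩ := exists_normSq_eq_natCast x.2
  rw [natNorm, hn, Nat.floor_natCast]

-- Round the coordinates of `z` in the real basis `(1, ω)`.
lemma exists_normSq_sub_lt_one (z : ℂ) : ∃ q ∈ ℤ[ω], normSq (z - q) < 1 := by
  have h3 : Real.sqrt 3 * Real.sqrt 3 = 3 := Real.mul_self_sqrt (by norm_num)
  have hs3 : Real.sqrt 3 ≠ 0 := by positivity
  set b := round (2 * z.im / Real.sqrt 3)
  set a := round (z.re + b / 2)
  refine ⟨a + b * ω, ⟨a, b, rfl⟩, ?_⟩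
  have hx := abs_sub_round (z.re + b / 2)
  have hy := abs_sub_round (2 * z.im / Real.sqrt 3)
  have hre : (z - (a + b * ω)).re = z.re + b / 2 - a := by simp; ring
  have him : (z - (a + b * ω)).im = (2 * z.im / Real.sqrt 3 - b) * (Real.sqrt 3 / 2) := by
    simp; field_simp
  rw [normSq_apply, hre, him]
  nlinarith [abs_le.mp hx, abs_le.mp hy, sq_abs (z.re + b / 2 - a),
    sq_abs (2 * z.im / Real.sqrt 3 - b)]

lemma exists_natNorm_sub_mul_lt (x y : ℤ[ω]) (hy : y ≠ 0) :
    ∃ q, natNorm (x - q * y) < natNorm y := by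
  have hy' : (y : ℂ) ≠ 0 := by exact_mod_cast hy
  obtain ⟨q, hq, hlt⟩ := exists_normSq_sub_lt_one (x / y)
  refine ⟨⟨q, hq⟩, ?_⟩
  have key : normSq ((x : ℂ) - q * y) = normSq ((x : ℂ) / y - q) * normSq (y : ℂ) := by
    rw [← normSq_mul, sub_mul, div_mul_cancel₀ _ hy']
  rw [← Nat.cast_lt (α := ℝ), natCast_natNorm, natCast_natNorm]
  push_cast
  rw [key]
  exact mul_lt_of_lt_one_left (normSq_pos.mpr hy') hlt

instance : IsPrincipalIdealRing ℤ[ω] :=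
  .of_exists_sub_mul_lt natNorm exists_natNorm_sub_mul_lt

lemma intCast_add_intCast_mul_ω_inj {a b c d : ℤ} :
    (a + b * ω : ℂ) = c + d * ω ↔ a = c ∧ b = d := by
  refine ⟨fun h => ?_, by rintro ⟨rfl, rfl⟩; rfl⟩
  have hs3 : Real.sqrt 3 ≠ 0 := by positivity
  have hbd : b = d := by
    have him := congrArg Complex.im h
    simp only [add_im, mul_im, intCast_re, intCast_im, ω_re, ω_im] at him
    exact_mod_cast
      mul_right_cancel₀ (div_ne_zero hs3 two_ne_zero) (by linarith : (b : ℝ) * _ = d * _)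
  subst hbd
  exact ⟨by exact_mod_cast add_right_cancel h, rfl⟩

noncomputable def intProdEquiv : (ℤ × ℤ) ≃ₗ[ℤ] ℤ[ω] := by
  refine LinearEquiv.ofBijective
    { toFun := fun p => ⟨p.1 + p.2 * ω, p.1, p.2, rfl⟩
      map_add' := fun p q => Subtype.ext <| by
        simp only [Prod.fst_add, Prod.snd_add]; push_cast; ring
      map_smul' := fun n p => Subtype.ext <| by
        simp only [Prod.smul_fst, Prod.smul_snd, smul_eq_mul, eq_intCast, Int.cast_id]
        push_cast; ring } ⟨?_, ?_⟩
  · rintro ⟨a, b⟩ ⟨c, d⟩ h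
    obtain ⟨rfl, rfl⟩ := intCast_add_intCast_mul_ω_inj.mp (congrArg Subtype.val h)
    rfl
  · rintro ⟨_, a, b, rfl⟩
    exact ⟨(a, b), rfl⟩

@[simp] lemma coe_intProdEquiv (p : ℤ × ℤ) : (intProdEquiv p : ℂ) = p.1 + p.2 * ω := rfl

instance : Module.Free ℤ ℤ[ω] := .of_equiv intProdEquiv

lemma finrank_int : finrank ℤ ℤ[ω] = 2 := by
  rw [← intProdEquiv.finrank_eq]; simp

end EisensteinInt

section ZLattice

variable {R : Subring ℂ} {V : Type*} [NormedAddCommGroup V] [NormedSpace ℂ V]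
  [FiniteDimensional ℂ V] (M : Submodule R V) [DiscreteTopology (M.restrictScalars ℤ)]

theorem Submodule.finite_of_discreteTopology_restrictScalars : Module.Finite R M :=
  have : Module.Finite ℤ M := .equiv ((M.restrictScalarsEquiv ℤ R V).restrictScalars ℤ)
  .of_restrictScalars_finite ℤ R M

theorem Submodule.free_of_discreteTopology_restrictScalars [IsPrincipalIdealRing R] :
    Module.Free R M :=
  have := M.finite_of_discreteTopology_restrictScalars
  have : Module.IsTorsionFree R V := .trans ℂ
  inferInstance

theorem Submodule.finrank_mul_finrank_of_isZLattice [Module.Free ℤ R] [Module.Free R M]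
    [IsZLattice ℝ (M.restrictScalars ℤ)] :
    finrank ℤ R * finrank R M = 2 * finrank ℂ V := by
  rw [Module.finrank_mul_finrank, ← ((M.restrictScalarsEquiv ℤ R V).restrictScalars ℤ).finrank_eq,
    ZLattice.rank ℝ, ← Module.finrank_mul_finrank ℝ ℂ V, Complex.finrank_real_complex]

end ZLattice

namespace EisensteinInt

variable {V : Type*} [AddCommGroup V] [Module ℂ V]

lemma smul_mem_of_ω_smul_eq {Γ : AddSubgroup V} (hω : ω • (Γ : Set V) = Γ) {z : ℂ}
    (hz : z ∈ ℤ[ω]) {x : V} (hx : x ∈ Γ) : z • x ∈ Γ := by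
  obtain ⟨a, b, rfl⟩ := hz
  have hωx : ω • x ∈ (Γ : Set V) := by rw [← hω]; exact Set.smul_mem_smul_set hx
  rw [add_smul, mul_smul, Int.cast_smul_eq_zsmul, Int.cast_smul_eq_zsmul]
  exact Γ.add_mem (Γ.zsmul_mem hx a) (Γ.zsmul_mem hωx b)

def submoduleOfSMulEq (Γ : AddSubgroup V) (hω : ω • (Γ : Set V) = Γ) : Submodule ℤ[ω] V :=
  { Γ with smul_mem' := fun z _ hx => smul_mem_of_ω_smul_eq hω z.2 hx }

lemma existsUnique_eq_add_of_basis {M : Submodule ℤ[ω] V} (b : Basis (Fin 2) ℤ[ω] M) {v : V}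
    (hv : v ∈ M) : ∃! p : (ℤ × ℤ) × ℤ × ℤ,
      v = ((p.1.1 : ℂ) + p.1.2 * ω) • (b 0 : V) + ((p.2.1 : ℂ) + p.2.2 * ω) • (b 1 : V) := by
  let e : ((ℤ × ℤ) × ℤ × ℤ) ≃ M := (intProdEquiv.toEquiv.prodCongr intProdEquiv.toEquiv).trans
    ((finTwoArrowEquiv ℤ[ω]).symm.trans b.equivFun.symm.toEquiv)
  have he : ∀ p, (e p : V) =
      ((p.1.1 : ℂ) + p.1.2 * ω) • (b 0 : V) + ((p.2.1 : ℂ) + p.2.2 * ω) • (b 1 : V) := by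
    intro p
    simp [e, Fin.sum_univ_two, Subring.smul_def]
  refine (existsUnique_congr fun p => ?_).mp (e.bijective.existsUnique ⟨v, hv⟩)
  rw [← he, eq_comm, Subtype.ext_iff]

end EisensteinInt

open EisensteinInt in
/-- A lattice `Γ` in ℂ² stable under scalar multiplication by the primitive cube root of
    unity `ω = (−1 + i√3)/2` is a free module of rank 2 over the Eisenstein integers
    ℤ[ω] = {a + b·ω : a, b ∈ ℤ}: there are `e₁, e₂ ∈ Γ` such that `Γ` consists exactly of
    the ℤ[ω]-combinations of `e₁, e₂`, each element of `Γ` being such a combination in a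
    unique way. -/
theorem lattice_stable_under_omega_free_rank_two
    (Γ : AddSubgroup (EuclideanSpace ℂ (Fin 2)))
    (hdisc : ∀ z : EuclideanSpace ℂ (Fin 2),
      ¬ AccPt z (Filter.principal (Γ : Set (EuclideanSpace ℂ (Fin 2)))))
    (hspan : Submodule.span ℝ (Γ : Set (EuclideanSpace ℂ (Fin 2))) = ⊤)
    (hω : ((-1 + Complex.I * (Real.sqrt 3 : ℂ)) / 2) • (Γ : Set (EuclideanSpace ℂ (Fin 2)))
      = (Γ : Set (EuclideanSpace ℂ (Fin 2)))) :
    ∃ e₁ e₂ : EuclideanSpace ℂ (Fin 2), e₁ ∈ Γ ∧ e₂ ∈ Γ ∧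
      (∀ a b c d : ℤ,
        ((a : ℂ) + (b : ℂ) * ((-1 + Complex.I * (Real.sqrt 3 : ℂ)) / 2)) • e₁ +
          ((c : ℂ) + (d : ℂ) * ((-1 + Complex.I * (Real.sqrt 3 : ℂ)) / 2)) • e₂ ∈ Γ) ∧
      ∀ v ∈ Γ, ∃! p : (ℤ × ℤ) × ℤ × ℤ,
        v = ((p.1.1 : ℂ) + (p.1.2 : ℂ) * ((-1 + Complex.I * (Real.sqrt 3 : ℂ)) / 2)) • e₁ +
            ((p.2.1 : ℂ) + (p.2.2 : ℂ) * ((-1 + Complex.I * (Real.sqrt 3 : ℂ)) / 2)) • e₂ := by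
  let M := submoduleOfSMulEq Γ hω
  have : DiscreteTopology (M.restrictScalars ℤ) := discreteTopology_of_noAccPts fun x _ => hdisc x
  have : IsZLattice ℝ (M.restrictScalars ℤ) := ⟨hspan⟩
  have := M.finite_of_discreteTopology_restrictScalars
  have := M.free_of_discreteTopology_restrictScalars
  have hrank : finrank ℤ[ω] M = 2 := by
    have := M.finrank_mul_finrank_of_isZLattice
    rw [finrank_int, finrank_euclideanSpace_fin] at this
    omega
  let b := Module.finBasisOfFinrankEq ℤ[ω] M hrank
  refine ⟨b 0, b 1, (b 0).2, (b 1).2, fun a₁ b₁ a₂ b₂ => ?_,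
    fun v hv => existsUnique_eq_add_of_basis b hv⟩
  exact Γ.add_mem (smul_mem_of_ω_smul_eq hω ⟨a₁, b₁, rfl⟩ (b 0).2)
    (smul_mem_of_ω_smul_eq hω ⟨a₂, b₂, rfl⟩ (b 1).2)
end

section
/- Let a, b, c, d be integers and let λ, α, β be complex numbers satisfying a·α + c·β = λ·α and b·α + d·β = λ·β (i.e., (α, β) is an eigenvector of the transpose of the matrix [[a, b], [c, d]] with eigenvalue λ). Define the monomial map φ(z, w) = (z^a·w^b, z^c·w^d) on the open set {(z, w) ∈ ℂ² : z ≠ 0 and w ≠ 0}, where powers with negative exponents are interpreted as zpow. Then φ is complex-differentiable on this open set, and for every (z, w) with z ≠ 0 ≠ w and every tangent vector (u, v) ∈ ℂ², writing (U, V) = Dφ(z, w)·(u, v) for the image of (u, v) under the derivative of φ at (z, w) and (Z, W) = φ(z, w), one has α·W·U + β·Z·V = λ·z^(a+c−1)·w^(b+d−1)·(α·w·u + β·z·v). -/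
/-!
In logarithmic coordinates `(log z, log w)` the monomial map is the linear map with matrix
`M = [[a, b], [c, d]]`, and `(α w dz + β z dw) / (z w) = α dz/z + β dw/w` is a constant
1-form there. Its pullback is therefore the constant form with coefficients `Mᵀ (α, β) = λ (α, β)`.
Concretely, the differential of `z^m w^n` is `z^m w^n (m dz/z + n dw/w)`, and
`z^a w^b · z^c w^d = z^(a+c-1) w^(b+d-1) · z w` converts back to the original form.
-/

open ContinuousLinearMap

theorem hasFDerivAt_zpow_mul_zpow {𝕜 : Type*} [NontriviallyNormedField 𝕜] (m n : ℤ) {z w : 𝕜}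
    (hz : z ≠ 0) (hw : w ≠ 0) :
    HasFDerivAt (fun p : 𝕜 × 𝕜 => p.1 ^ m * p.2 ^ n)
      ((z ^ m * w ^ n) • ((m / z : 𝕜) • fst 𝕜 𝕜 𝕜 + (n / w : 𝕜) • snd 𝕜 𝕜 𝕜)) (z, w) := by
  have hfst := (hasDerivAt_zpow m z (.inl hz)).comp_hasFDerivAt (z, w) (hasFDerivAt_fst (𝕜 := 𝕜))
  have hsnd := (hasDerivAt_zpow n w (.inl hw)).comp_hasFDerivAt (z, w) (hasFDerivAt_snd (𝕜 := 𝕜))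
  refine (hfst.mul hsnd).congr_fderiv ?_
  ext <;> simp [zpow_sub_one₀ hz, zpow_sub_one₀ hw] <;> ring

/-- The monomial map `φ(z, w) = (z^a·w^b, z^c·w^d)` is complex-differentiable on
    `{z ≠ 0} ∩ {w ≠ 0}` and pulls back the 1-form `α·w·dz + β·z·dw` to a function multiple
    of itself when `(α, β)` is an eigenvector of the transposed matrix `[[a, c], [b, d]]`
    with eigenvalue `λ`. -/
theorem monomial_map_preserves_linear_foliation
    (a b c d : ℤ) (α β lam : ℂ)
    (h1 : (a : ℂ) * α + (c : ℂ) * β = lam * α)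
    (h2 : (b : ℂ) * α + (d : ℂ) * β = lam * β) :
    ∀ z w : ℂ, z ≠ 0 → w ≠ 0 →
      DifferentiableAt ℂ (fun p : ℂ × ℂ => (p.1 ^ a * p.2 ^ b, p.1 ^ c * p.2 ^ d)) (z, w) ∧
      ∀ u v : ℂ,
        α * (z ^ c * w ^ d) *
            (fderiv ℂ (fun p : ℂ × ℂ => (p.1 ^ a * p.2 ^ b, p.1 ^ c * p.2 ^ d)) (z, w) (u, v)).1 +
          β * (z ^ a * w ^ b) *
            (fderiv ℂ (fun p : ℂ × ℂ => (p.1 ^ a * p.2 ^ b, p.1 ^ c * p.2 ^ d)) (z, w) (u, v)).2 =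
        lam * z ^ (a + c - 1) * w ^ (b + d - 1) * (α * w * u + β * z * v) := by
  intro z w hz hw
  have hφ := (hasFDerivAt_zpow_mul_zpow a b hz hw).prodMk (hasFDerivAt_zpow_mul_zpow c d hz hw)
  refine ⟨hφ.differentiableAt, fun u v => ?_⟩
  have hZW : z ^ a * w ^ b * (z ^ c * w ^ d) = z ^ (a + c - 1) * w ^ (b + d - 1) * (z * w) := by
    rw [zpow_sub_one₀ hz, zpow_sub_one₀ hw, zpow_add₀ hz, zpow_add₀ hw]
    field_simp
  rw [hφ.fderiv]
  simp only [prod_apply, smul_apply, add_apply, smul_eq_mul, coe_fst', coe_snd']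
  calc _ = z ^ a * w ^ b * (z ^ c * w ^ d) *
        (((a : ℂ) * α + c * β) * u / z + ((b : ℂ) * α + d * β) * v / w) := by ring
    _ = _ := by
      rw [hZW, h1, h2]
      field_simp
end

section
/- Let α ∈ ℂ be a complex number that is not rational, i.e., α is not the image of any rational number under the inclusion ℚ ⊂ ℂ. Let P be an irreducible polynomial in two variables z, w over ℂ such that P divides α·z·(∂P/∂z) − w·(∂P/∂w) in the polynomial ring ℂ[z, w]. Then P is a nonzero scalar multiple of z or a nonzero scalar multiple of w. -/
/-!
The vector field acts diagonally on monomials: `z^a w^b` is an eigenvector with eigenvalue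
`α a - b`. Hence it does not raise the total degree, so if `P` divides its image the quotient
is a constant `μ`, and every monomial of `P` has eigenvalue `μ`. For irrational `α` the
eigenvalues of distinct monomials are distinct, so `P` is a monomial, and an irreducible
monomial is a coordinate up to a scalar.
-/

namespace MvPolynomial

variable {σ R : Type*}

theorem coeff_X_mul_pderiv [CommSemiring R] (i : σ) (m : σ →₀ ℕ) (p : MvPolynomial σ R) :
    coeff m (X i * pderiv i p) = m i * coeff m p := by
  induction p using MvPolynomial.induction_on' with
  | monomial n a =>
    classical
    rw [X_mul_pderiv_monomial, coeff_smul, coeff_monomial]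
    split_ifs with h
    · rw [h, nsmul_eq_mul]
    · rw [smul_zero, mul_zero]
  | add p q hp hq => rw [map_add, mul_add, coeff_add, coeff_add, hp, hq, mul_add]

theorem coeff_linearVectorField [CommRing R] (α : R) (p : MvPolynomial (Fin 2) R)
    (m : Fin 2 →₀ ℕ) :
    coeff m (C α * X 0 * pderiv 0 p - X 1 * pderiv 1 p) = (α * m 0 - m 1) * coeff m p := by
  rw [coeff_sub, mul_assoc, coeff_C_mul, coeff_X_mul_pderiv, coeff_X_mul_pderiv]
  ring

theorem totalDegree_linearVectorField_le [CommRing R] (α : R) (p : MvPolynomial (Fin 2) R) :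
    (C α * X 0 * pderiv 0 p - X 1 * pderiv 1 p).totalDegree ≤ p.totalDegree := by
  refine totalDegree_le_of_support_subset fun m hm => ?_
  rw [mem_support_iff, coeff_linearVectorField] at hm
  rw [mem_support_iff]
  exact right_ne_zero_of_mul hm

theorem eq_C_of_totalDegree_mul_le [CommRing R] [IsDomain R] {p q : MvPolynomial σ R}
    (hp : p ≠ 0) (h : (p * q).totalDegree ≤ p.totalDegree) : q = C (coeff 0 q) := by
  rcases eq_or_ne q 0 with rfl | hq
  · simp
  rw [totalDegree_mul_of_isDomain hp hq] at h
  exact totalDegree_eq_zero_iff_eq_C.1 (by omega)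

theorem _root_.Irreducible.exists_eq_C_mul_X_of_X_dvd [CommRing R] [IsDomain R]
    {p : MvPolynomial σ R} (hp : Irreducible p) {i : σ} (hX : X i ∣ p) :
    ∃ r, IsUnit r ∧ p = C r * X i := by
  obtain ⟨q, rfl⟩ := hX
  obtain ⟨r, hr, rfl⟩ :=
    isUnit_iff_eq_C_of_isReduced.1 ((hp.isUnit_or_isUnit rfl).resolve_left X_prime.not_isUnit)
  exact ⟨r, hr, mul_comm _ _⟩

theorem _root_.Irreducible.exists_eq_C_mul_X_of_eq_monomial {K : Type*} [Field K]
    {p : MvPolynomial σ K} (hp : Irreducible p) {n : σ →₀ ℕ} {c : K} (hn : p = monomial n c) :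
    ∃ i r, r ≠ 0 ∧ p = C r * X i := by
  obtain ⟨i, hi⟩ : ∃ i, n i ≠ 0 := by
    by_contra! h
    rw [show n = 0 from Finsupp.ext h, monomial_zero'] at hn
    have hc : c ≠ 0 := by rintro rfl; exact hp.ne_zero (by rw [hn, C_0])
    exact hp.not_isUnit (hn ▸ (isUnit_iff_ne_zero.2 hc).map C)
  obtain ⟨r, hr, hp_eq⟩ := hp.exists_eq_C_mul_X_of_X_dvd (i := i) (hn ▸ X_dvd_monomial.2 (.inr hi))
  exact ⟨i, r, hr.ne_zero, hp_eq⟩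

end MvPolynomial

theorem eq_and_eq_of_mul_sub_eq_mul_sub {K : Type*} [Field K] [CharZero K] {α : K}
    (hα : ∀ q : ℚ, (q : K) ≠ α) {a b c d : ℕ} (h : α * a - b = α * c - d) : a = c ∧ b = d := by
  by_cases hac : a = c
  · subst hac
    exact ⟨rfl, by exact_mod_cast sub_right_inj.1 h⟩
  have hne : (a : K) - c ≠ 0 := sub_ne_zero.2 (Nat.cast_injective.ne hac)
  refine (hα (((b : ℚ) - d) / ((a : ℚ) - c)) ?_).elim
  push_cast
  rw [div_eq_iff hne]
  linear_combination -h

theorem injective_mul_sub_of_irrational {K : Type*} [Field K] [CharZero K] {α : K}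
    (hα : ∀ q : ℚ, (q : K) ≠ α) : Function.Injective fun m : Fin 2 →₀ ℕ => α * m 0 - m 1 := by
  intro m m' h
  obtain ⟨h0, h1⟩ := eq_and_eq_of_mul_sub_eq_mul_sub hα h
  ext j
  fin_cases j
  exacts [h0, h1]

open MvPolynomial in
/-- For irrational `α`, the only irreducible polynomials defining algebraic curves
    invariant by the vector field `α·z·∂/∂z − w·∂/∂w` (i.e. dividing their own image
    under this derivation) are scalar multiples of the coordinates `z` and `w`. -/
theorem invariant_curves_of_irrational_linear_foliation
    (α : ℂ) (hα : ∀ q : ℚ, (q : ℂ) ≠ α)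
    (P : MvPolynomial (Fin 2) ℂ) (hirr : Irreducible P)
    (hdvd : P ∣ (C α * X 0 * pderiv 0 P - X 1 * pderiv 1 P)) :
    (∃ c : ℂ, c ≠ 0 ∧ P = C c * X 0) ∨ (∃ c : ℂ, c ≠ 0 ∧ P = C c * X 1) := by
  obtain ⟨Q, hQ⟩ := hdvd
  obtain ⟨μ, rfl⟩ : ∃ μ, Q = C μ :=
    ⟨_, eq_C_of_totalDegree_mul_le hirr.ne_zero (hQ ▸ totalDegree_linearVectorField_le α P)⟩
  have hweight : ∀ m ∈ P.support, α * m 0 - m 1 = μ := fun m hm =>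
    mul_right_cancel₀ (mem_support_iff.1 hm) <| by
      rw [← coeff_linearVectorField, hQ, mul_comm, coeff_C_mul]
  obtain ⟨M, hM⟩ := support_nonempty.2 hirr.ne_zero
  have hmono : P = monomial M (coeff M P) := eq_monomial_of_support_subset_singleton
    fun m hm => injective_mul_sub_of_irrational hα ((hweight m hm).trans (hweight M hM).symm)
  obtain ⟨i, r, hr, hP⟩ := hirr.exists_eq_C_mul_X_of_eq_monomial hmono
  fin_cases i
  exacts [.inl ⟨r, hr, hP⟩, .inr ⟨r, hr, hP⟩]
end

section
/- Let n ≥ 1 and equip ℝ^(n+1) with the standard Minkowski bilinear form B(x, y) = x₀·y₀ − x₁·y₁ − ⋯ − xₙ·yₙ of signature (1, n). Let g be a linear automorphism of ℝ^(n+1) preserving B, i.e., B(g x, g y) = B(x, y) for all x, y. Then among the complex eigenvalues of g (the roots of its characteristic polynomial), at most one has modulus strictly greater than 1; moreover, if λ is an eigenvalue with |λ| > 1, then λ is real and is a simple root of the characteristic polynomial of g. -/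
open Polynomial Matrix

namespace MinkAux

variable {n : ℕ}

def Jm (R : Type*) [Ring R] (n : ℕ) : Matrix (Fin (n+1)) (Fin (n+1)) R :=
  Matrix.diagonal (fun i => if i = 0 then 1 else -1)

def B {R : Type*} [CommRing R] (z w : Fin (n+1) → R) : R :=
  z 0 * w 0 - ∑ i : Fin n, z i.succ * w i.succ

lemma B_eq_dot {R : Type*} [CommRing R] (z w : Fin (n+1) → R) :
    B z w = z ⬝ᵥ (Jm R n).mulVec w := by
  simp only [B, Jm, dotProduct, mulVec_diagonal, Fin.sum_univ_succ, if_pos, Fin.succ_ne_zero,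
    if_false, one_mul, neg_one_mul, mul_neg, Finset.sum_neg_distrib]
  ring

variable {R : Type*} [CommRing R]

lemma B_symm (z w : Fin (n+1) → R) : B z w = B w z := by
  simp only [B]
  congr 1
  · ring
  · exact Finset.sum_congr rfl fun i _ => mul_comm _ _

lemma B_smul_left (c : R) (z w : Fin (n+1) → R) : B (c • z) w = c * B z w := by
  simp only [B, Pi.smul_apply, smul_eq_mul, mul_sub, Finset.mul_sum]
  congr 1
  · ring
  · exact Finset.sum_congr rfl fun i _ => by ring

lemma B_smul_right (c : R) (z w : Fin (n+1) → R) : B z (c • w) = c * B z w := by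
  rw [B_symm, B_smul_left, B_symm]

lemma B_add_left (x y w : Fin (n+1) → R) : B (x + y) w = B x w + B y w := by
  simp only [B, Pi.add_apply, add_mul, Finset.sum_add_distrib]
  ring

lemma B_add_right (x y w : Fin (n+1) → R) : B w (x + y) = B w x + B w y := by
  rw [B_symm, B_add_left, B_symm x w, B_symm y w]

lemma B_neg_right (z w : Fin (n+1) → R) : B z (-w) = - B z w := by
  have : -w = (-1 : R) • w := by funext i; simp
  rw [this, B_smul_right]; ring

lemma B_zero_left (w : Fin (n+1) → R) : B 0 w = 0 := by
  simp [B]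

lemma B_zero_right (w : Fin (n+1) → R) : B w 0 = 0 := by
  rw [B_symm, B_zero_left]

/-- A vector that is B-null and has vanishing 0-th coordinate is zero. -/
lemma null_vec {w : Fin (n+1) → ℝ} (hw : B w w = 0) (h0 : w 0 = 0) : w = 0 := by
  have hsum : ∑ i : Fin n, w i.succ * w i.succ = 0 := by
    simp only [B, h0] at hw; linarith
  have hz : ∀ i ∈ Finset.univ, w (Fin.succ i) * w (Fin.succ i) = 0 := by
    intro i _
    have := Finset.sum_eq_zero_iff_of_nonneg (fun i _ => mul_self_nonneg (w i.succ)) |>.mp hsum i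
      (Finset.mem_univ i)
    exact this
  funext k
  refine Fin.cases ?_ ?_ k
  · exact h0
  · intro i
    have := hz i (Finset.mem_univ i)
    exact mul_self_eq_zero.mp this

/-- Two B-orthogonal null vectors are proportional. -/
lemma isotropic_line {u v : Fin (n+1) → ℝ} (hu : B u u = 0) (hv : B v v = 0)
    (huv : B u v = 0) (hu0 : u ≠ 0) : ∃ c : ℝ, v = c • u := by
  have h0 : u 0 ≠ 0 := by
    intro h
    exact hu0 (null_vec hu h)
  refine ⟨v 0 / u 0, ?_⟩
  set c : ℝ := v 0 / u 0 with hc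
  have hw0 : (v - c • u) 0 = 0 := by
    simp only [Pi.sub_apply, Pi.smul_apply, smul_eq_mul, hc]
    field_simp
    ring
  have hsub : v - c • u = v + (-c) • u := by funext i; simp; ring
  have hBw : B (v - c • u) (v - c • u) = 0 := by
    rw [hsub, B_add_left, B_add_right, B_add_right, B_smul_left, B_smul_left, B_smul_right,
      B_smul_right, B_symm u v, B_symm v u]
    rw [hu, hv, huv]
    ring
  have := null_vec hBw hw0
  have : v = c • u := by
    funext i
    have h := congrFun this i
    simp only [Pi.sub_apply, Pi.zero_apply] at h
    linarith [h]
  exact this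

/-- Invariance of B under a matrix satisfying the Minkowski identity. -/
lemma B_mulVec_eq {K : Type*} [CommRing K] (M : Matrix (Fin (n+1)) (Fin (n+1)) K)
    (hM : Mᵀ * (Jm K n * M) = Jm K n) (z w : Fin (n+1) → K) :
    B (M.mulVec z) (M.mulVec w) = B z w := by
  rw [B_eq_dot, B_eq_dot, Matrix.mulVec_mulVec, Matrix.dotProduct_mulVec,
    ← Matrix.vecMul_transpose, Matrix.vecMul_vecMul, hM, Matrix.dotProduct_mulVec]


lemma B_mulVec {K : Type*} [CommRing K] (M : Matrix (Fin (n+1)) (Fin (n+1)) K)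
    (z w : Fin (n+1) → K) :
    B (M.mulVec z) (M.mulVec w) = z ⬝ᵥ (Mᵀ * (Jm K n * M)).mulVec w := by
  rw [B_eq_dot, Matrix.mulVec_mulVec, Matrix.dotProduct_mulVec, ← Matrix.vecMul_transpose,
    Matrix.vecMul_vecMul, Matrix.dotProduct_mulVec]

/-- From the invariance hypothesis to the matrix identity. -/
lemma matrix_identity {g : Matrix (Fin (n+1)) (Fin (n+1)) ℝ}
    (hB : ∀ x y, B (g.mulVec x) (g.mulVec y) = B x y) :
    gᵀ * (Jm ℝ n * g) = Jm ℝ n := by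
  ext i j
  have h := hB (Pi.single i 1) (Pi.single j 1)
  rw [B_mulVec, B_eq_dot] at h
  simpa [single_dotProduct, Matrix.mulVec_single] using h

lemma Jm_map : (Jm ℝ n).map (algebraMap ℝ ℂ) = Jm ℂ n := by
  ext i j
  by_cases h : i = j
  · subst h
    simp only [Jm, Matrix.map_apply, Matrix.diagonal_apply_eq]
    split <;> simp
  · simp [Jm, Matrix.diagonal_apply_ne _ h]

lemma matrix_identity_c {g : Matrix (Fin (n+1)) (Fin (n+1)) ℝ}
    (hJ : gᵀ * (Jm ℝ n * g) = Jm ℝ n) :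
    (g.map (algebraMap ℝ ℂ))ᵀ * (Jm ℂ n * g.map (algebraMap ℝ ℂ)) = Jm ℂ n := by
  have : (g.map (algebraMap ℝ ℂ))ᵀ * (Jm ℂ n * g.map (algebraMap ℝ ℂ))
      = (gᵀ * (Jm ℝ n * g)).map (algebraMap ℝ ℂ) := by
    rw [Matrix.map_mul (f := algebraMap ℝ ℂ), Matrix.map_mul (f := algebraMap ℝ ℂ),
      Matrix.transpose_map, Jm_map]
  rw [this, hJ, Jm_map]

/-- A root of the (complex) characteristic polynomial admits an eigenvector. -/
lemma exists_eigenvector {N : ℕ} (M : Matrix (Fin N) (Fin N) ℂ) (μ : ℂ)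
    (h : M.charpoly.IsRoot μ) : ∃ z : Fin N → ℂ, z ≠ 0 ∧ M.mulVec z = μ • z := by
  have hdet : (Matrix.scalar (Fin N) μ - M).det = 0 := by
    rw [Polynomial.IsRoot, Matrix.charpoly, eval_det, Matrix.matPolyEquiv_charmatrix] at h
    simpa using h
  obtain ⟨v, hv, hve⟩ := (Matrix.exists_mulVec_eq_zero_iff).mpr hdet
  refine ⟨v, hv, ?_⟩
  have hscal : (Matrix.scalar (Fin N) μ).mulVec v = μ • v := by
    funext i
    rw [Matrix.scalar_apply]
    simp [Matrix.mulVec_diagonal]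
  have h2 : μ • v - M.mulVec v = 0 := by rw [← hscal, ← Matrix.sub_mulVec]; exact hve
  exact (sub_eq_zero.mp h2).symm


lemma B_re (z w : Fin (n+1) → ℂ) :
    (B z w).re = B (fun i => (z i).re) (fun i => (w i).re)
      - B (fun i => (z i).im) (fun i => (w i).im) := by
  simp only [B, Complex.sub_re, Complex.mul_re, Complex.re_sum, Finset.sum_sub_distrib]
  ring

lemma B_im (z w : Fin (n+1) → ℂ) :
    (B z w).im = B (fun i => (z i).re) (fun i => (w i).im)
      + B (fun i => (z i).im) (fun i => (w i).re) := by
  simp only [B, Complex.sub_im, Complex.mul_im, Complex.im_sum, Finset.sum_add_distrib]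
  ring


lemma mulVec_star_comm (g : Matrix (Fin (n+1)) (Fin (n+1)) ℝ) (z : Fin (n+1) → ℂ) :
    (g.map (algebraMap ℝ ℂ)).mulVec (star z) = star ((g.map (algebraMap ℝ ℂ)).mulVec z) := by
  funext i
  simp [Matrix.mulVec, dotProduct, star_sum, star_mul', Matrix.map_apply,
    Complex.star_def, Complex.conj_ofReal, map_sum, _root_.map_mul]

lemma factor_ne_one {μ ν : ℂ} (hμ : 1 < ‖μ‖) (hν : 1 < ‖ν‖) :
    μ * ν ≠ 1 := by
  intro h
  have : ‖μ * ν‖ = 1 := by rw [h, norm_one]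
  rw [norm_mul] at this
  nlinarith [norm_nonneg μ, norm_nonneg ν]

lemma B_eq_zero_of_eig {K : Type*} [Field K] (M : Matrix (Fin (n+1)) (Fin (n+1)) K)
    (hM : ∀ z w, B (M.mulVec z) (M.mulVec w) = B z w) {μ ν : K} {z w : Fin (n+1) → K}
    (hz : M.mulVec z = μ • z) (hw : M.mulVec w = ν • w) (hμν : μ * ν ≠ 1) :
    B z w = 0 := by
  have h := hM z w
  rw [hz, hw, B_smul_left, B_smul_right] at h
  have h2 : (μ * ν - 1) * B z w = 0 := by ring_nf; linear_combination h
  rcases mul_eq_zero.mp h2 with h3 | h3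
  · exact absurd (by linear_combination h3) hμν
  · exact h3

/-- Real/imaginary parts of an expanding eigenvector are B-null and orthogonal. -/
lemma parts_null (g : Matrix (Fin (n+1)) (Fin (n+1)) ℝ)
    (hBr : ∀ x y, B (g.mulVec x) (g.mulVec y) = B x y) {μ : ℂ}
    (hμ : 1 < ‖μ‖) {z : Fin (n+1) → ℂ}
    (hez : (g.map (algebraMap ℝ ℂ)).mulVec z = μ • z) :
    B (fun i => (z i).re) (fun i => (z i).re) = 0 ∧
    B (fun i => (z i).im) (fun i => (z i).im) = 0 ∧
    B (fun i => (z i).re) (fun i => (z i).im) = 0 := by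
  set M := g.map (algebraMap ℝ ℂ) with hMdef
  have hBc : ∀ z w, B (M.mulVec z) (M.mulVec w) = B z w :=
    B_mulVec_eq M (matrix_identity_c (matrix_identity hBr))
  have hstar : M.mulVec (star z) = star μ • star z := by
    rw [hMdef, mulVec_star_comm, ← hMdef, hez, star_smul]
  have habs : 1 < ‖star μ‖ := by
    rwa [Complex.star_def, Complex.norm_conj]
  have hzz : B z z = 0 := B_eq_zero_of_eig M hBc hez hez (factor_ne_one hμ hμ)
  have hzzs : B z (star z) = 0 := B_eq_zero_of_eig M hBc hez hstar (factor_ne_one hμ habs)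
  have hre : B (fun i => (z i).re) (fun i => (z i).re)
      - B (fun i => (z i).im) (fun i => (z i).im) = 0 := by
    rw [← B_re, hzz, Complex.zero_re]
  have him : B (fun i => (z i).re) (fun i => (z i).im) = 0 := by
    have h := congrArg Complex.im hzz
    rw [B_im, Complex.zero_im] at h
    rw [B_symm (fun i => (z i).im)] at h
    linarith
  have hres : B (fun i => (z i).re) (fun i => (z i).re)
      + B (fun i => (z i).im) (fun i => (z i).im) = 0 := by
    have h := congrArg Complex.re hzzs
    rw [B_re, Complex.zero_re] at h
    have e1 : (fun i => ((star z) i).re) = fun i => (z i).re := by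
      funext i; simp [Complex.star_def]
    have e2 : (fun i => ((star z) i).im) = fun i => -(z i).im := by
      funext i; simp [Complex.star_def]
    rw [e1, e2] at h
    have e3 : B (fun i => (z i).im) (fun i => -(z i).im)
        = - B (fun i => (z i).im) (fun i => (z i).im) := by
      have : (fun i => -(z i).im) = -(fun i => (z i).im) := rfl
      rw [this, B_neg_right]
    rw [e3] at h
    linarith
  exact ⟨by linarith, by linarith, him⟩


/-- Componentwise real part of the eigenvalue equation. -/
lemma eig_re_im (g : Matrix (Fin (n+1)) (Fin (n+1)) ℝ) {μ : ℂ} {z : Fin (n+1) → ℂ}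
    (hez : (g.map (algebraMap ℝ ℂ)).mulVec z = μ • z) :
    (g.mulVec (fun i => (z i).re) = fun i => μ.re * (z i).re - μ.im * (z i).im) ∧
    (g.mulVec (fun i => (z i).im) = fun i => μ.re * (z i).im + μ.im * (z i).re) := by
  constructor <;> funext i <;>
  · have h := congrFun hez i
    have hre := congrArg Complex.re h
    have him := congrArg Complex.im h
    simp only [Matrix.mulVec, dotProduct, Matrix.map_apply, Complex.re_sum,
      Complex.im_sum, Complex.mul_re, Complex.mul_im, Complex.ofReal_re, Complex.ofReal_im,
      Complex.coe_algebraMap, Pi.smul_apply, smul_eq_mul, zero_mul, sub_zero, add_zero,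
      zero_add] at hre him
    simp only [Matrix.mulVec, dotProduct]
    first
      | exact hre
      | exact him

/-- An expanding eigenvalue is real, and has a real eigenvector which is B-null. -/
lemma real_eig (g : Matrix (Fin (n+1)) (Fin (n+1)) ℝ)
    (hBr : ∀ x y, B (g.mulVec x) (g.mulVec y) = B x y) {μ : ℂ}
    (hμ : 1 < ‖μ‖) {z : Fin (n+1) → ℂ} (hz : z ≠ 0)
    (hez : (g.map (algebraMap ℝ ℂ)).mulVec z = μ • z) :
    μ.im = 0 ∧ ∃ u : Fin (n+1) → ℝ, u ≠ 0 ∧ g.mulVec u = μ.re • u ∧ B u u = 0 := by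
  obtain ⟨haa, hbb, hab⟩ := parts_null g hBr hμ hez
  obtain ⟨hga, hgb⟩ := eig_re_im g hez
  have hab0 : (fun i => (z i).re) ≠ (0 : Fin (n+1) → ℝ) ∨
      (fun i => (z i).im) ≠ (0 : Fin (n+1) → ℝ) := by
    by_contra hcon
    push_neg at hcon
    apply hz
    funext i
    apply Complex.ext
    · exact congrFun hcon.1 i
    · exact congrFun hcon.2 i
  have him : μ.im = 0 := by
    by_contra him
    rcases eq_or_ne (fun i => (z i).re) (0 : Fin (n+1) → ℝ) with h0 | h0
    · have hb0 : (fun i => (z i).im) = (0 : Fin (n+1) → ℝ) := by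
        funext i
        have e := congrFun hga i
        have hre0 : ∀ j, (z j).re = 0 := fun j => congrFun h0 j
        rw [h0, Matrix.mulVec_zero] at e
        simp only [Pi.zero_apply, hre0 i, mul_zero, zero_sub] at e
        have : μ.im * (z i).im = 0 := by linarith
        rcases mul_eq_zero.mp this with h | h
        · exact absurd h him
        · simpa using h
      rcases hab0 with h | h
      · exact h h0
      · exact h hb0
    · obtain ⟨c, hc⟩ := isotropic_line haa hbb hab h0
      obtain ⟨i, hi⟩ : ∃ i, (z i).re ≠ 0 := by
        by_contra hcon
        push_neg at hcon
        exact h0 (funext hcon)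
      have hgb' := hgb
      rw [hc, Matrix.mulVec_smul] at hgb'
      have e1 := congrFun hga i
      have e2 := congrFun hgb' i
      simp only [Pi.smul_apply, smul_eq_mul] at e1 e2
      have hci : (z i).im = c * (z i).re := by
        have := congrFun hc i
        simpa using this
      rw [hci] at e1 e2
      have hkey : μ.im * (1 + c^2) * (z i).re = 0 := by
        linear_combination (c : ℝ) * e1 - e2
      have h1c : (1 : ℝ) + c^2 > 0 := by positivity
      rcases mul_eq_zero.mp hkey with h | h
      · rcases mul_eq_zero.mp h with h' | h'
        · exact him h'
        · linarith
      · exact hi h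
  refine ⟨him, ?_⟩
  rcases hab0 with h | h
  · refine ⟨_, h, ?_, haa⟩
    rw [hga]
    funext i
    simp [him]
  · refine ⟨_, h, ?_, hbb⟩
    rw [hgb]
    funext i
    simp [him]


/-- Characteristic polynomial of a shifted matrix. -/
lemma charpoly_shift {N : ℕ} (g : Matrix (Fin N) (Fin N) ℝ) (r : ℝ) :
    (g - r • (1 : Matrix (Fin N) (Fin N) ℝ)).charpoly
      = g.charpoly.comp (Polynomial.X + Polynomial.C r) := by
  let ψ : Polynomial ℝ →+* Polynomial ℝ :=
    (Polynomial.aeval (Polynomial.X + Polynomial.C r) : Polynomial ℝ →ₐ[ℝ] Polynomial ℝ).toRingHom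
  have hmat : Matrix.charmatrix (g - r • 1) = (Matrix.charmatrix g).map ψ := by
    refine Matrix.ext fun i j => ?_
    by_cases h : i = j
    · subst h
      simp only [Matrix.charmatrix_apply_eq, Matrix.map_apply, Matrix.sub_apply,
        Matrix.smul_apply, Matrix.one_apply_eq, smul_eq_mul, mul_one]
      simp only [ψ, AlgHom.toRingHom_eq_coe, RingHom.coe_coe, map_sub, Polynomial.aeval_X,
        Polynomial.aeval_C, Polynomial.algebraMap_eq]
      ring
    · simp only [Matrix.charmatrix_apply_ne _ _ _ h, Matrix.map_apply, Matrix.sub_apply,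
        Matrix.smul_apply, Matrix.one_apply_ne h, smul_eq_mul, mul_zero, sub_zero]
      simp [ψ, Polynomial.algebraMap_eq]
  rw [Matrix.charpoly, hmat, ← RingHom.mapMatrix_apply, ← RingHom.map_det, Matrix.charpoly]
  rfl


/-- An expanding real eigenvalue is a simple root of the characteristic polynomial. -/
lemma mult_le_one (g : Matrix (Fin (n+1)) (Fin (n+1)) ℝ)
    (hBr : ∀ x y, B (g.mulVec x) (g.mulVec y) = B x y) {r : ℝ} (hr : 1 < |r|) :
    g.charpoly.rootMultiplicity r ≤ 1 := by
  by_contra hcon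
  push_neg at hcon
  have h2 : 2 ≤ g.charpoly.rootMultiplicity r := hcon
  have hr2 : r * r ≠ 1 := by
    intro h
    have : |r| * |r| = 1 := by rw [abs_mul_abs_self]; exact h
    nlinarith [abs_nonneg r]
  set A : Matrix (Fin (n+1)) (Fin (n+1)) ℝ := g - r • 1 with hA
  set φ : Module.End ℝ (Fin (n+1) → ℝ) := Matrix.toLin' A with hφ
  have hφap : ∀ x, φ x = g.mulVec x - r • x := by
    intro x
    rw [hφ, Matrix.toLin'_apply, hA, Matrix.sub_mulVec, Matrix.smul_mulVec,
      Matrix.one_mulVec]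
  have hgx : ∀ x, g.mulVec x = r • x + φ x := by
    intro x
    rw [hφap x]
    abel
  have key : ∀ s k j : ℕ, ∀ x y : Fin (n+1) → ℝ, k + j ≤ s →
      (φ ^ k) x = 0 → (φ ^ j) y = 0 → B x y = 0 := by
    intro s
    induction s with
    | zero =>
      intro k j x y hs hx hy
      have hk : k = 0 := by omega
      subst hk
      rw [pow_zero, Module.End.one_apply] at hx
      rw [hx]
      exact B_zero_left y
    | succ s ih =>
      intro k j x y hs hx hy
      match k, j with
      | 0, j =>
        rw [pow_zero, Module.End.one_apply] at hx
        rw [hx]; exact B_zero_left y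
      | k, 0 =>
        rw [pow_zero, Module.End.one_apply] at hy
        rw [hy]; exact B_zero_right x
      | k'+1, j'+1 =>
        have hφx : (φ ^ k') (φ x) = 0 := by
          rw [← Module.End.mul_apply, ← pow_succ]; exact hx
        have hφy : (φ ^ j') (φ y) = 0 := by
          rw [← Module.End.mul_apply, ← pow_succ]; exact hy
        have h1 : B x (φ y) = 0 := ih (k'+1) j' x (φ y) (by omega) hx hφy
        have h2' : B (φ x) y = 0 := ih k' (j'+1) (φ x) y (by omega) hφx hy
        have h3 : B (φ x) (φ y) = 0 := ih k' j' (φ x) (φ y) (by omega) hφx hφy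
        have heq := hBr x y
        rw [hgx x, hgx y, B_add_left, B_add_right, B_add_right, B_smul_left, B_smul_left,
          B_smul_right, B_smul_right, h1, h2', h3] at heq
        have hz : (r * r - 1) * B x y = 0 := by linear_combination heq
        rcases mul_eq_zero.mp hz with h | h
        · exact absurd (by linarith) hr2
        · exact h
  have hBU : ∀ x ∈ φ.maxGenEigenspace 0, ∀ y ∈ φ.maxGenEigenspace 0, B x y = 0 := by
    intro x hx y hy
    rw [Module.End.mem_maxGenEigenspace] at hx hy
    simp only [zero_smul, sub_zero] at hx hy
    obtain ⟨k, hk⟩ := hx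
    obtain ⟨j, hj⟩ := hy
    exact key (k + j) k j x y le_rfl hk hj
  have hfin : Module.finrank ℝ (φ.maxGenEigenspace 0) = g.charpoly.rootMultiplicity r := by
    rw [LinearMap.finrank_maxGenEigenspace_zero_eq]
    have hcp : φ.charpoly = A.charpoly := by
      rw [hφ, ← Matrix.toLin_eq_toLin', ← LinearMap.charpoly_toMatrix (Matrix.toLin
        (Pi.basisFun ℝ (Fin (n+1))) (Pi.basisFun ℝ (Fin (n+1))) A) (Pi.basisFun ℝ (Fin (n+1)))]
      congr 1
      rw [LinearMap.toMatrix_eq_toMatrix', Matrix.toLin_eq_toLin']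
      exact LinearMap.toMatrix'_toLin' A
    rw [hcp, hA, charpoly_shift, Polynomial.rootMultiplicity_eq_natTrailingDegree]
  obtain ⟨u, hu, hu0⟩ : ∃ u ∈ φ.maxGenEigenspace 0, u ≠ (0 : Fin (n+1) → ℝ) := by
    rw [← Submodule.ne_bot_iff]
    intro hbot
    rw [hbot] at hfin
    rw [finrank_bot ℝ (Fin (n+1) → ℝ)] at hfin
    omega
  have hspan : φ.maxGenEigenspace 0 ≤ Submodule.span ℝ {u} := by
    intro y hy
    obtain ⟨c, hc⟩ := isotropic_line (hBU u hu u hu) (hBU y hy y hy) (hBU u hu y hy) hu0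
    exact Submodule.mem_span_singleton.mpr ⟨c, hc.symm⟩
  have hle := Submodule.finrank_mono hspan
  rw [hfin, finrank_span_singleton hu0] at hle
  omega

end MinkAux


open MinkAux in
/-- An automorphism of ℝ^(n+1) preserving the standard Minkowski form of signature
    (1, n) has at most one eigenvalue of modulus > 1; such an eigenvalue is real and a
    simple root of the characteristic polynomial. -/
theorem minkowski_isometry_at_most_one_expanding_eigenvalue
    (n : ℕ) (hn : 1 ≤ n)
    (g : Matrix (Fin (n + 1)) (Fin (n + 1)) ℝ) (hg : IsUnit g.det)
    (hB : ∀ x y : Fin (n + 1) → ℝ,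
      g.mulVec x 0 * g.mulVec y 0 - ∑ i : Fin n, g.mulVec x i.succ * g.mulVec y i.succ
        = x 0 * y 0 - ∑ i : Fin n, x i.succ * y i.succ) :
    (∀ μ ν : ℂ, (g.charpoly.map (algebraMap ℝ ℂ)).IsRoot μ →
        (g.charpoly.map (algebraMap ℝ ℂ)).IsRoot ν →
        1 < ‖μ‖ → 1 < ‖ν‖ → μ = ν) ∧
      ∀ μ : ℂ, (g.charpoly.map (algebraMap ℝ ℂ)).IsRoot μ → 1 < ‖μ‖ →
        μ.im = 0 ∧ (g.charpoly.map (algebraMap ℝ ℂ)).rootMultiplicity μ = 1 := by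
  have hBr : ∀ x y, MinkAux.B (g.mulVec x) (g.mulVec y) = MinkAux.B x y := by
    intro x y
    simpa only [MinkAux.B] using hB x y
  have main : ∀ μ : ℂ, (g.charpoly.map (algebraMap ℝ ℂ)).IsRoot μ → 1 < ‖μ‖ →
      μ.im = 0 ∧ ∃ u : Fin (n+1) → ℝ, u ≠ 0 ∧ g.mulVec u = μ.re • u ∧ MinkAux.B u u = 0 := by
    intro μ hroot habs
    rw [← Matrix.charpoly_map] at hroot
    obtain ⟨z, hz, hez⟩ := MinkAux.exists_eigenvector _ μ hroot
    exact MinkAux.real_eig g hBr habs hz hez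
  have habs_re : ∀ μ : ℂ, μ.im = 0 → ‖μ‖ = |μ.re| := by
    intro μ him
    have : μ = (μ.re : ℂ) := Complex.ext rfl (by simp [him])
    rw [this, Complex.norm_real]
    simp
  constructor
  · intro μ ν hμr hνr hμa hνa
    obtain ⟨hμim, u, hu0, hgu, huu⟩ := main μ hμr hμa
    obtain ⟨hνim, v, hv0, hgv, hvv⟩ := main ν hνr hνa
    have hra : 1 < |μ.re| := by rw [← habs_re μ hμim]; exact hμa
    have hsa : 1 < |ν.re| := by rw [← habs_re ν hνim]; exact hνa
    have hprod : μ.re * ν.re ≠ 1 := by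
      intro h
      have : |μ.re| * |ν.re| = 1 := by rw [← abs_mul, h, abs_one]
      nlinarith [abs_nonneg μ.re, abs_nonneg ν.re]
    have hBuv : MinkAux.B u v = 0 := MinkAux.B_eq_zero_of_eig g hBr hgu hgv hprod
    obtain ⟨c, hc⟩ := MinkAux.isotropic_line huu hvv hBuv hu0
    have hgv2 : g.mulVec v = μ.re • v := by
      rw [hc, Matrix.mulVec_smul, hgu, smul_comm]
    have heq : ν.re • v = μ.re • v := by rw [← hgv, hgv2]
    obtain ⟨i, hi⟩ := Function.ne_iff.mp hv0
    have : ν.re * v i = μ.re * v i := congrFun heq i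
    have hre : μ.re = ν.re := by
      have hvi : v i ≠ 0 := by simpa using hi
      field_simp at this
      exact this.symm
    exact Complex.ext hre (hμim.trans hνim.symm)
  · intro μ hroot habs
    obtain ⟨hμim, u, hu0, hgu, huu⟩ := main μ hroot habs
    refine ⟨hμim, ?_⟩
    have hμr : μ = (μ.re : ℂ) := Complex.ext rfl (by simp [hμim])
    have hrabs : 1 < |μ.re| := by
      rw [habs_re μ hμim] at habs; exact habs
    have hmult := MinkAux.mult_le_one g hBr hrabs
    have hmap : (g.charpoly.map (algebraMap ℝ ℂ)).rootMultiplicity μ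
        = g.charpoly.rootMultiplicity μ.re := by
      rw [hμr]
      exact (Polynomial.eq_rootMultiplicity_map (algebraMap ℝ ℂ).injective μ.re).symm
    have hne : g.charpoly.map (algebraMap ℝ ℂ) ≠ 0 :=
      ((Matrix.charpoly_monic g).map (algebraMap ℝ ℂ)).ne_zero
    have hpos : 0 < (g.charpoly.map (algebraMap ℝ ℂ)).rootMultiplicity μ :=
      (Polynomial.rootMultiplicity_pos hne).mpr hroot
    omega
end
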